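/- Let k ≥ 3 be an odd integer and let D be a k-quasi-transitive digraph. If P = (u_0, u_1, …, u_{k+1}, u_{k+2}) is a directed path in D of minimum length from u_0 to u_{k+2}, i.e., d(u_0,u_{k+2}) = k+2, then d⁺(u_{k+1}) ≥ d⁺(u_0) + (k−1)/2. -/

import Mathlib

/-!
Write the shortest path as `u_0, …, u_{k+2}`. Minimality forbids arcs `u_a → u_b` with
`b ≥ a + 2`, so whenever `k`-quasi-transitivity joins two vertices of the path, the arc points
backwards. Applied to the subpaths of length `k` this gives the arcs `u_k → u_0`,
`u_{k+1} → u_1`, `u_{k+2} → u_2`, and then to length-`k` paths that wrap around through these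
arcs it gives `u_{k+2} → u_0` and `u_{k+1} → u_{k-2}, u_{k-4}, …, u_3`.

An out-neighbour `w ≠ u_1` of `u_0` lies off the path and has no arc to `u_3, …, u_{k+2}`.
The length-`k` path `u_2, …, u_k, u_0, w` joins `u_2` and `w`. If `w → u_2`, the path
`w, u_2, …, u_{k+1}` forces `u_{k+1} → w`. If `u_2 → w`, each arc `u_m → w` yields
`u_{m+2} → w` through `u_{m+2}, …, u_{k+1}, u_1, …, u_m, w`; as `k` is odd this reaches
`u_{k+1}`. Hence `N⁺(u_0) ⊆ N⁺(u_{k+1})`, and `u_3, u_5, …, u_{k-2}, u_{k+2}` are `(k-1)/2`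
further out-neighbours of `u_{k+1}`.
-/

variable {V : Type*}

/-- A directed path of length `n` from `u` to `v` in the digraph with arc relation `A`:
a sequence of `n + 1` pairwise distinct vertices, consecutive ones joined by arcs. -/
def HasPathN (A : V → V → Prop) (u v : V) (n : ℕ) : Prop :=
  ∃ f : Fin (n + 1) → V, Function.Injective f ∧ f 0 = u ∧ f (Fin.last n) = v ∧
    ∀ i : Fin n, A (f i.castSucc) (f i.succ)

/-- The distance from `u` to `v`: the length of a shortest directed path from `u` to `v`,
`⊤` if there is no such path. -/
noncomputable def ddist (A : V → V → Prop) (u v : V) : ℕ∞ :=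
  sInf {n : ℕ∞ | ∃ m : ℕ, n = (m : ℕ∞) ∧ HasPathN A u v m}

/-- `D` is `k`-quasi-transitive if for every directed path `(v_0, …, v_k)` of length `k`,
either `(v_0, v_k)` or `(v_k, v_0)` is an arc. -/
def KQuasiTrans (A : V → V → Prop) (k : ℕ) : Prop :=
  ∀ u v : V, HasPathN A u v k → A u v ∨ A v u

/-- A vertex `v` is an `r`-king if every vertex is within distance `r` from `v`. -/
def IsRKing (A : V → V → Prop) (r : ℕ) (v : V) : Prop :=
  ∀ u : V, ddist A v u ≤ (r : ℕ∞)

/-- `u` reaches `v` by a directed path. -/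
def Reaches (A : V → V → Prop) (u v : V) : Prop :=
  ∃ n : ℕ, HasPathN A u v n

/-- A strong component: the set of all vertices mutually reachable with some vertex. -/
def IsStrongComponent (A : V → V → Prop) (S : Set V) : Prop :=
  ∃ v : V, S = {u | Reaches A u v ∧ Reaches A v u}

/-- An initial strong component: a strong component receiving no arcs from outside. -/
def IsInitialStrongComponent (A : V → V → Prop) (S : Set V) : Prop :=
  IsStrongComponent A S ∧ ∀ u v : V, u ∉ S → v ∈ S → ¬ A u v

/-- The out-degree of `v` in `D`. -/
noncomputable def outDeg (A : V → V → Prop) (v : V) : ℕ :=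
  {u : V | A v u}.ncard

/-- The out-degree of `v` in the subdigraph of `D` induced by `C`. -/
noncomputable def outDegIn (A : V → V → Prop) (C : Set V) (v : V) : ℕ :=
  {u ∈ C | A v u}.ncard

/-- The maximum out-degree of the subdigraph induced by `C`. -/
noncomputable def maxOutDegIn (A : V → V → Prop) (C : Set V) : ℕ :=
  sSup (outDegIn A C '' C)

theorem hasPathN_of_isChain {A : V → V → Prop} {l : List V} {u v : V} {n : ℕ}
    (hchain : l.IsChain A) (hnodup : l.Nodup) (hlen : l.length = n + 1)
    (hu : l.head? = some u) (hv : l.getLast? = some v) : HasPathN A u v n := by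
  rw [List.head?_eq_getElem?, List.getElem?_eq_some_iff] at hu
  rw [List.getLast?_eq_getElem?, List.getElem?_eq_some_iff] at hv
  refine ⟨fun i => l[i.val], fun i j h => Fin.ext (hnodup.getElem_inj_iff.mp h), hu.2, ?_,
    fun i => List.isChain_iff_getElem.mp hchain i (by omega)⟩
  simpa [hlen] using hv.2

theorem ddist_le_of_hasPathN {A : V → V → Prop} {u v : V} {n : ℕ} (h : HasPathN A u v n) :
    ddist A u v ≤ n :=
  sInf_le ⟨n, rfl, h⟩

theorem outDeg_add_card_le [Finite V] {A : V → V → Prop} {u v : V} (E : Finset V)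
    (hsub : ∀ w, A u w → A v w) (hE : ∀ x ∈ E, A v x ∧ ¬ A u x) :
    outDeg A u + E.card ≤ outDeg A v := by
  rw [outDeg, outDeg, ← Set.ncard_coe_finset, ← Set.ncard_union_eq]
  · exact Set.ncard_le_ncard (Set.union_subset hsub fun x hx => (hE x hx).1)
  · exact Set.disjoint_right.mpr fun x hx => (hE x hx).2

/-- The list `g a, g (a + 1), …, g b`; empty if `b < a`. -/
def seg (g : ℕ → V) (a b : ℕ) : List V := (List.range' a (b + 1 - a)).map g

section seg
variable {A : V → V → Prop} {g : ℕ → V} {a b : ℕ} {x : V}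

theorem mem_seg : x ∈ seg g a b ↔ ∃ i, (a ≤ i ∧ i ≤ b) ∧ g i = x := by
  simp only [seg, List.mem_map, List.mem_range'_1]
  exact exists_congr fun i => and_congr_left' (by omega)

@[simp] theorem forall_mem_seg {P : V → Prop} :
    (∀ x ∈ seg g a b, P x) ↔ ∀ i, a ≤ i → i ≤ b → P (g i) := by
  simp only [mem_seg]
  grind

@[simp] theorem notMem_seg : x ∉ seg g a b ↔ ∀ i, a ≤ i → i ≤ b → g i ≠ x := by
  simp [mem_seg]

@[simp] theorem length_seg : (seg g a b).length = b + 1 - a := by simp [seg]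

theorem head?_seg (h : a ≤ b) : (seg g a b).head? = some (g a) := by
  simp [seg, List.head?_range']
  omega

theorem getLast?_seg (h : a ≤ b) : (seg g a b).getLast? = some (g b) := by
  simp only [seg, List.getLast?_map, List.getLast?_range', if_neg (show b + 1 - a ≠ 0 by omega),
    show a + (b + 1 - a) - 1 = b by omega, Option.map_some]

theorem isChain_seg (h : ∀ i, a ≤ i → i < b → A (g i) (g (i + 1))) :
    (seg g a b).IsChain A := by
  refine List.isChain_iff_getElem.mpr fun i hi => ?_
  simp only [seg, List.length_map, List.length_range', List.getElem_map,
    List.getElem_range'] at hi ⊢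
  exact h _ (by omega) (by omega)

end seg

structure IsGeodesic (A : V → V → Prop) (g : ℕ → V) (N : ℕ) : Prop where
  injOn : Set.InjOn g (Set.Iic N)
  adj : ∀ i < N, A (g i) (g (i + 1))
  le_of_hasPathN : ∀ m, HasPathN A (g 0) (g N) m → N ≤ m

theorem isGeodesic_of_fin {A : V → V → Prop} {N : ℕ} (f : Fin (N + 1) → V)
    (hinj : Function.Injective f) (harc : ∀ i : Fin N, A (f i.castSucc) (f i.succ))
    (hdist : ddist A (f 0) (f (Fin.last N)) = N) :
    IsGeodesic A (fun i => f (Fin.ofNat (N + 1) i)) N where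
  injOn i hi j hj h := by
    simpa [Nat.mod_eq_of_lt (Nat.lt_succ_of_le hi), Nat.mod_eq_of_lt (Nat.lt_succ_of_le hj)]
      using congrArg Fin.val (hinj h)
  adj i hi := by
    convert harc ⟨i, hi⟩ using 2 <;> ext <;> simp <;> omega
  le_of_hasPathN m h := by
    have := ddist_le_of_hasPathN h
    rw [show Fin.ofNat (N + 1) N = Fin.last N by ext; simp, Fin.ofNat_zero, hdist] at this
    exact_mod_cast this

namespace IsGeodesic
variable {A : V → V → Prop} {g : ℕ → V} {N a b i j k m : ℕ} {w : V}

theorem apply_ne (hP : IsGeodesic A g N) (hi : i ≤ N) (hj : j ≤ N) (hij : i ≠ j) :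
    g i ≠ g j :=
  fun h => hij (hP.injOn (Set.mem_Iic.mpr hi) (Set.mem_Iic.mpr hj) h)

theorem apply_mem_seg_iff (hP : IsGeodesic A g N) (hi : i ≤ N) (hb : b ≤ N) :
    g i ∈ seg g a b ↔ a ≤ i ∧ i ≤ b := by
  refine ⟨fun h => ?_, fun h => mem_seg.mpr ⟨i, h, rfl⟩⟩
  obtain ⟨j, hj, hji⟩ := mem_seg.mp h
  obtain rfl := hP.injOn (Set.mem_Iic.mpr (hj.2.trans hb)) (Set.mem_Iic.mpr hi) hji
  exact hj

theorem isChain_seg (hP : IsGeodesic A g N) (hb : b ≤ N) : (seg g a b).IsChain A :=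
  _root_.isChain_seg fun i _ hi => hP.adj i (by omega)

theorem nodup_seg (hP : IsGeodesic A g N) (hb : b ≤ N) : (seg g a b).Nodup :=
  (List.nodup_range').map_on fun i hi j hj h => by
    simp only [List.mem_range'_1] at hi hj
    exact hP.injOn (Set.mem_Iic.mpr (by omega)) (Set.mem_Iic.mpr (by omega)) h

theorem not_adj (hP : IsGeodesic A g N) (hab : a + 2 ≤ b) (hb : b ≤ N) : ¬ A (g a) (g b) := by
  intro h
  have := hP.le_of_hasPathN (N + 1 + a - b) <| hasPathN_of_isChain (l := seg g 0 a ++ seg g b N)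
    (by simp (disch := omega) [List.isChain_append, hP.isChain_seg, head?_seg, getLast?_seg, h])
    (by simp +contextual (disch := omega) [List.nodup_append, hP.nodup_seg, hP.apply_ne])
    (by simp; omega) (by simp [head?_seg]) (by simp [getLast?_seg, hb])
  omega

theorem ne_of_adj_zero (hP : IsGeodesic A g N) (hloop : ∀ v, ¬ A v v) (hw : A (g 0) w)
    (hw1 : g 1 ≠ w) (hi : i ≤ N) : g i ≠ w := by
  rintro rfl
  match i with
  | 0 => exact hloop _ hw
  | 1 => exact hw1 rfl
  | i + 2 => exact hP.not_adj (by omega) hi hw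

theorem not_adj_of_adj_zero (hP : IsGeodesic A g N) (hw : A (g 0) w) (hwP : ∀ i ≤ N, g i ≠ w)
    (hj : 3 ≤ j) (hjN : j ≤ N) : ¬ A w (g j) := by
  intro h
  have := hP.le_of_hasPathN (N + 2 - j) <| hasPathN_of_isChain (l := g 0 :: w :: seg g j N)
    (by simp [List.isChain_cons, hP.isChain_seg, head?_seg, hjN, hw, h])
    (by simp +contextual (disch := omega) [hP.nodup_seg, hP.apply_mem_seg_iff, hwP]; omega)
    (by simp; omega) rfl (by simp [List.getLast?_cons, getLast?_seg hjN])
  omega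

theorem adj_add_self_of_le_two (hqt : KQuasiTrans A k) (hP : IsGeodesic A g (k + 2))
    (hk : 2 ≤ k) (ha : a ≤ 2) : A (g (a + k)) (g a) :=
  (hqt _ _ (hasPathN_of_isChain (l := seg g a (a + k)) (hP.isChain_seg (by omega))
    (hP.nodup_seg (by omega)) (by simp; omega) (head?_seg (by omega))
    (getLast?_seg (by omega)))).resolve_left (hP.not_adj (by omega) (by omega))

theorem adj_last_zero (hqt : KQuasiTrans A k) (hP : IsGeodesic A g (k + 2)) (hk : 2 ≤ k) :
    A (g (k + 2)) (g 0) := by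
  have h2 : A (g (k + 2)) (g 2) := by
    simpa [Nat.add_comm] using hP.adj_add_self_of_le_two hqt (by omega) le_rfl
  have h0 : A (g k) (g 0) := by
    simpa using hP.adj_add_self_of_le_two hqt (by omega) (Nat.zero_le 2)
  refine (hqt _ _ (hasPathN_of_isChain (l := g (k + 2) :: seg g 2 k ++ [g 0])
    (by simp (disch := omega) [List.isChain_cons, List.isChain_append, hP.isChain_seg, head?_seg,
      getLast?_seg, h2, h0])
    (by simp +contextual (disch := omega) [List.nodup_append, hP.nodup_seg, hP.apply_ne,
      hP.apply_mem_seg_iff])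
    (by simp; omega) rfl (by simp [List.getLast?_cons]))).resolve_right
    (hP.not_adj (by omega) le_rfl)

theorem adj_k_sub_two (hqt : KQuasiTrans A k) (hP : IsGeodesic A g (k + 2)) (hk : 2 ≤ k) :
    A (g (k + 1)) (g (k - 2)) := by
  have hlast := hP.adj_last_zero hqt hk
  refine (hqt _ _ (hasPathN_of_isChain (l := seg g (k + 1) (k + 2) ++ seg g 0 (k - 2))
    (by simp (disch := omega) [List.isChain_append, hP.isChain_seg, head?_seg, getLast?_seg,
      hlast])
    (by simp +contextual (disch := omega) [List.nodup_append, hP.nodup_seg, hP.apply_ne])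
    (by simp; omega) (by simp [head?_seg]) (by simp (disch := omega) [getLast?_seg])))
    |>.resolve_right (hP.not_adj (by omega) (by omega))

theorem adj_sub_two_of_adj (hqt : KQuasiTrans A k) (hP : IsGeodesic A g (k + 2))
    (hm : 3 ≤ m) (hmk : m ≤ k) (h : A (g (k + 1)) (g m)) : A (g (k + 1)) (g (m - 2)) := by
  have h0 : A (g k) (g 0) := by
    simpa using hP.adj_add_self_of_le_two hqt (by omega) (Nat.zero_le 2)
  refine (hqt _ _ (hasPathN_of_isChain (l := g (k + 1) :: seg g m k ++ seg g 0 (m - 2))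
    (by simp (disch := omega) [List.isChain_cons, List.isChain_append, hP.isChain_seg, head?_seg,
      getLast?_seg, h, h0])
    (by simp +contextual (disch := omega) [List.nodup_append, hP.nodup_seg, hP.apply_ne,
      hP.apply_mem_seg_iff]; omega)
    (by simp; omega) rfl (by simp (disch := omega) [List.getLast?_cons, List.getLast?_append,
      getLast?_seg]))).resolve_right
    (hP.not_adj (by omega) (by omega))

theorem adj_of_even (hqt : KQuasiTrans A k) (hP : IsGeodesic A g (k + 2))
    (hj : 3 ≤ j) (hjk : j + 2 ≤ k) (he : Even (k - j)) : A (g (k + 1)) (g j) := by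
  obtain ⟨t, ht⟩ := he
  induction t generalizing j with
  | zero => omega
  | succ t ih =>
    rcases Nat.eq_zero_or_pos t with rfl | ht0
    · obtain rfl : j = k - 2 := by omega
      exact hP.adj_k_sub_two hqt (by omega)
    · simpa using hP.adj_sub_two_of_adj hqt (m := j + 2) (by omega) (by omega)
        (ih (by omega) (by omega) (by omega))

theorem adj_add_two_of_adj (hqt : KQuasiTrans A k) (hP : IsGeodesic A g (k + 2))
    (hw : A (g 0) w) (hwP : ∀ i ≤ k + 2, g i ≠ w) (hm : 2 ≤ m) (hmk : m + 1 ≤ k)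
    (h : A (g m) w) : A (g (m + 2)) w := by
  have h1 : A (g (k + 1)) (g 1) := by
    simpa [Nat.add_comm] using hP.adj_add_self_of_le_two hqt (by omega) (by omega : 1 ≤ 2)
  refine (hqt _ _ (hasPathN_of_isChain (l := seg g (m + 2) (k + 1) ++ seg g 1 m ++ [w])
    (by simp (disch := omega) [List.isChain_append, hP.isChain_seg, head?_seg, getLast?_seg,
      h1, h])
    (by simp +contextual (disch := omega) [List.nodup_append, hP.nodup_seg, hP.apply_ne,
      or_imp, forall_and, hwP])
    (by simp; omega) (by simp (disch := omega) [head?_seg]) (by simp))).resolve_right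
    (hP.not_adj_of_adj_zero hw hwP (by omega) (by omega))

theorem adj_of_adj_two (hqt : KQuasiTrans A k) (hP : IsGeodesic A g (k + 2))
    (hko : Odd k) (hw : A (g 0) w) (hwP : ∀ i ≤ k + 2, g i ≠ w) (h : A (g 2) w) :
    A (g (k + 1)) w := by
  obtain ⟨c, rfl⟩ := hko
  have : ∀ t ≤ c, A (g (2 * t + 2)) w := by
    intro t ht
    induction t with
    | zero => exact h
    | succ t ih => exact hP.adj_add_two_of_adj hqt hw hwP (by omega) (by omega) (ih (by omega))
  exact this c le_rfl

theorem adj_of_adj_zero (hqt : KQuasiTrans A k) (hP : IsGeodesic A g (k + 2)) (hk : 2 ≤ k)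
    (hko : Odd k) (hloop : ∀ v, ¬ A v v) (hw : A (g 0) w) : A (g (k + 1)) w := by
  have h0 : A (g k) (g 0) := by
    simpa using hP.adj_add_self_of_le_two hqt (by omega) (Nat.zero_le 2)
  have h1 : A (g (k + 1)) (g 1) := by
    simpa [Nat.add_comm] using hP.adj_add_self_of_le_two hqt (by omega) (by omega : 1 ≤ 2)
  by_cases hw1 : g 1 = w
  · exact hw1 ▸ h1
  have hwP : ∀ i ≤ k + 2, g i ≠ w := fun i hi => hP.ne_of_adj_zero hloop hw hw1 hi
  have hpath : HasPathN A (g 2) w k := hasPathN_of_isChain (l := seg g 2 k ++ [g 0, w])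
    (by simp (disch := omega) [List.isChain_append, hP.isChain_seg, getLast?_seg, h0, hw])
    (by simp +contextual (disch := omega) [List.nodup_append, hP.nodup_seg, hP.apply_ne, hwP])
    (by simp; omega) (by simp (disch := omega) [head?_seg]) (by simp)
  rcases hqt _ _ hpath with h2 | h2
  · exact hP.adj_of_adj_two hqt hko hw hwP h2
  refine (hqt _ _ (hasPathN_of_isChain (l := w :: seg g 2 (k + 1))
    (by simp (disch := omega) [List.isChain_cons, hP.isChain_seg, head?_seg, h2])
    (by simp +contextual (disch := omega) [hP.nodup_seg, hwP])
    (by simp) rfl (by simp (disch := omega) [List.getLast?_cons, getLast?_seg]))).resolve_left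
    (hP.not_adj_of_adj_zero hw hwP (by omega) (by omega))

theorem outDeg_add_le [Finite V]
    (hqt : KQuasiTrans A k) (hP : IsGeodesic A g (k + 2)) (hk : 3 ≤ k) (hko : Odd k)
    (hloop : ∀ v, ¬ A v v) : outDeg A (g 0) + (k - 1) / 2 ≤ outDeg A (g (k + 1)) := by
  classical
  obtain ⟨c, hc⟩ := hko
  let E : Finset V := insert (g (k + 2)) ((Finset.range (c - 1)).image fun i => g (2 * i + 3))
  have hE : ∀ x ∈ E, A (g (k + 1)) x ∧ ¬ A (g 0) x := by
    simp only [E, Finset.mem_insert, Finset.mem_image, Finset.mem_range]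
    rintro _ (rfl | ⟨i, hi, rfl⟩)
    · exact ⟨hP.adj (k + 1) (by omega), hP.not_adj (by omega) le_rfl⟩
    · exact ⟨hP.adj_of_even hqt (by omega) (by omega) ⟨c - 1 - i, by omega⟩,
        hP.not_adj (by omega) (by omega)⟩
  have hcard : E.card = c := by
    rw [Finset.card_insert_of_notMem, Finset.card_image_of_injOn, Finset.card_range]
    · omega
    · intro i hi j hj h
      simp only [Finset.coe_range, Set.mem_Iio] at hi hj
      have := hP.injOn (Set.mem_Iic.mpr (by omega)) (Set.mem_Iic.mpr (by omega)) h
      omega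
    · simp only [Finset.mem_image, Finset.mem_range, not_exists, not_and]
      exact fun i hi => hP.apply_ne (by omega) le_rfl (by omega)
  have := outDeg_add_card_le E (fun w => hP.adj_of_adj_zero hqt (by omega) ⟨c, hc⟩ hloop) hE
  omega

end IsGeodesic

/-- odd `k ≥ 3`; if `(u_0, …, u_{k+2})` is a shortest path (so
`d(u_0, u_{k+2}) = k+2`), then `d⁺(u_{k+1}) ≥ d⁺(u_0) + (k−1)/2`. -/
theorem kqt_odd_degree_jump
    [Fintype V] (A : V → V → Prop) (hloop : ∀ v : V, ¬ A v v)
    (k : ℕ) (hk : 3 ≤ k) (hko : Odd k) (hqt : KQuasiTrans A k)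
    (f : Fin (k + 3) → V) (hinj : Function.Injective f)
    (harc : ∀ i : Fin (k + 2), A (f i.castSucc) (f i.succ))
    (hdist : ddist A (f 0) (f (Fin.last (k + 2))) = ((k : ℕ∞) + 2)) :
    outDeg A (f 0) + (k - 1) / 2 ≤ outDeg A (f ⟨k + 1, by omega⟩) := by
  have hP := isGeodesic_of_fin f hinj harc (by rw [hdist]; push_cast; rfl)
  have hpen : Fin.ofNat (k + 3) (k + 1) = ⟨k + 1, by omega⟩ :=
    Fin.ext (Nat.mod_eq_of_lt (by omega))
  simpa only [Fin.ofNat_zero, hpen] using hP.outDeg_add_le hqt hk hko hloop
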